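/- arXiv:1709.00332 — 5 statements merged into one kernel-verified Lean document; each statement's English description precedes it below -/
import Mathlib

section
/- Let Z be a Banach space and V a bounded linear operator on Z. Then the kernel of the operator [I+V, I−V] : Z×Z → Z (mapping (x,y) to (I+V)x + (I−V)y) equals the range of the operator mapping l ∈ Z to ((I−V)l, (−I−V)l) ∈ Z×Z. -/
/-- Kernel of `[I+V, I−V]` equals the range of `l ↦ ((I−V)l, (−I−V)l)`. -/
theorem kernel_eq_range {Z : Type*} [NormedAddCommGroup Z] [NormedSpace ℂ Z] [CompleteSpace Z]
    (V : Z →L[ℂ] Z) :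
    {p : Z × Z | (1 + V) p.1 + (1 - V) p.2 = 0} =
      Set.range (fun l : Z => (((1 - V) l, (-1 - V) l) : Z × Z)) := by
  ext p
  simp only [Set.mem_setOf_eq, Set.mem_range, ContinuousLinearMap.add_apply,
    ContinuousLinearMap.sub_apply, ContinuousLinearMap.neg_apply, ContinuousLinearMap.one_apply]
  constructor
  · intro h
    refine ⟨(2:ℂ)⁻¹ • (p.1 - p.2), ?_⟩
    have h1 : V p.1 = -p.1 - p.2 + V p.2 := by
      have := h
      abel_nf at this ⊢
      linear_combination (norm := abel) this
    ext
    · simp only [map_smul, map_sub, h1]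
      rw [smul_sub, smul_sub]
      match_scalars <;> ring
    · simp only [map_smul, map_sub, h1]
      rw [smul_sub, smul_sub]
      match_scalars <;> ring
  · rintro ⟨l, rfl⟩
    simp only [map_sub, map_neg, map_add]
    abel
end

section
/- Let H be a Hilbert space and W = [W1, W2] with W1, W2 bounded operators on H such that W1 + W2 is injective and ran(W1 − W2) ⊆ ran(W1 + W2). Then there exists a unique bounded operator V on H such that W1 = (1/2)(W1+W2)(I+V) and W2 = (1/2)(W1+W2)(I−V). -/
/-- Existence and uniqueness of the factorization
`[W1, W2] = (1/2)(W1+W2)[I+V, I−V]`. -/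
theorem exists_unique_factorization {H : Type*} [NormedAddCommGroup H]
    [InnerProductSpace ℂ H] [CompleteSpace H]
    (W1 W2 : H →L[ℂ] H) (hinj : Function.Injective (W1 + W2))
    (hran : Set.range ⇑(W1 - W2) ⊆ Set.range ⇑(W1 + W2)) :
    ∃! V : H →L[ℂ] H,
      W1 = ((1/2 : ℂ) • (W1 + W2)) ∘L (1 + V) ∧
      W2 = ((1/2 : ℂ) • (W1 + W2)) ∘L (1 - V) := by
  have hexists : ∀ x : H, ∃ y, (W1 + W2) y = (W1 - W2) x := fun x => hran ⟨x, rfl⟩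
  choose f hf using hexists
  have hadd : ∀ x y, f (x + y) = f x + f y := by
    intro x y
    apply hinj
    simp only [map_add, hf]
  have hsmul : ∀ (c : ℂ) x, f (c • x) = c • f x := by
    intro c x
    apply hinj
    simp only [map_smul, hf]
  let V₀ : H →ₗ[ℂ] H :=
    { toFun := f, map_add' := hadd, map_smul' := hsmul }
  have hgraph : (V₀.graph : Set (H × H)) = {p : H × H | (W1 + W2) p.2 = (W1 - W2) p.1} := by
    ext p
    simp only [SetLike.mem_coe, LinearMap.mem_graph_iff, Set.mem_setOf_eq]
    constructor
    · rintro h; rw [h]; exact hf p.1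
    · intro h
      exact hinj (show (W1 + W2) p.2 = (W1 + W2) (f p.1) by rw [hf p.1, h])
  have hclosed : IsClosed (V₀.graph : Set (H × H)) := by
    rw [hgraph]
    exact isClosed_eq (((W1 + W2).continuous).comp continuous_snd)
      (((W1 - W2).continuous).comp continuous_fst)
  have hcont : Continuous V₀ := V₀.continuous_of_isClosed_graph hclosed
  let V : H →L[ℂ] H := { toLinearMap := V₀, cont := hcont }
  have hVf : ∀ x, V x = f x := fun _ => rfl
  have key : ∀ x : H, (W1 + W2) (V x) = (W1 - W2) x := fun x => hf x
  refine ⟨V, ⟨?_, ?_⟩, ?_⟩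
  · ext x
    have h := key x
    simp only [ContinuousLinearMap.comp_apply, ContinuousLinearMap.smul_apply,
      ContinuousLinearMap.add_apply, ContinuousLinearMap.one_apply, map_add,
      ContinuousLinearMap.sub_apply] at h ⊢
    rw [h]
    simp only [ContinuousLinearMap.add_apply, ContinuousLinearMap.sub_apply] at *
    module
  · ext x
    have h := key x
    simp only [ContinuousLinearMap.comp_apply, ContinuousLinearMap.smul_apply,
      ContinuousLinearMap.sub_apply, ContinuousLinearMap.one_apply, map_sub,
      ContinuousLinearMap.add_apply] at h ⊢
    rw [h]
    simp only [ContinuousLinearMap.add_apply, ContinuousLinearMap.sub_apply] at *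
    module
  · rintro V' ⟨h1, h2⟩
    ext x
    apply hinj
    rw [key x]
    have e1 := congrFun (congrArg (fun g : H →L[ℂ] H => ⇑g) h1) x
    have e2 := congrFun (congrArg (fun g : H →L[ℂ] H => ⇑g) h2) x
    simp only [ContinuousLinearMap.comp_apply, ContinuousLinearMap.smul_apply,
      ContinuousLinearMap.add_apply, ContinuousLinearMap.sub_apply,
      ContinuousLinearMap.one_apply, map_add, map_sub] at e1 e2
    have h3 : W1 x - W2 x =
        ((1/2 : ℂ) • (W1 x + W2 x) + (1/2 : ℂ) • (W1 (V' x) + W2 (V' x))) -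
        ((1/2 : ℂ) • (W1 x + W2 x) - (1/2 : ℂ) • (W1 (V' x) + W2 (V' x))) := by
      rw [← e1, ← e2]
    have : (W1 - W2) x = (W1 + W2) (V' x) := by
      simp only [ContinuousLinearMap.sub_apply, ContinuousLinearMap.add_apply]
      rw [h3]; module
    rw [this]
end

section
/- Let H be a Hilbert space and W1, W2 bounded operators on H with W1+W2 injective, ran(W1−W2) ⊆ ran(W1+W2), and V the unique bounded operator with [W1, W2] = (1/2)(W1+W2)[I+V, I−V]. Then W2 W1* + W1 W2* ≥ 0 if and only if V V* ≤ I. -/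
/-!
Put `S = W1 + W2` and `T = S / 2`, so that `W1 = T (1 + V)` and `W2 = T (1 - V)`. Expanding,
`W2 W1* + W1 W2* = T (2 (1 - V V*)) T*`, hence `⟪x, (W2 W1* + W1 W2*) x⟫ = 2 ⟪T* x, (1 - V V*) T* x⟫`.
So positivity of `W2 W1* + W1 W2*` is positivity of `1 - V V*` on the range of `T*`. Since `S` is
injective this range is dense (its closure is `(ker S)ᗮ`), and the quadratic form of `1 - V V*` is
continuous, so positivity on the range of `T*` is positivity everywhere.
-/

open ContinuousLinearMap

theorem mul_one_sub_mul_star_add {R : Type*} [Ring R] [StarRing R] (T V : R) :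
    T * (1 - V) * star (T * (1 + V)) + T * (1 + V) * star (T * (1 - V))
      = T * (2 * (1 - V * star V)) * star T := by
  simp only [star_mul, star_add, star_sub, star_one]
  noncomm_ring

section InnerProductSpace

variable {𝕜 E : Type*} [RCLike 𝕜] [NormedAddCommGroup E] [InnerProductSpace 𝕜 E]

theorem re_inner_two_mul_one_sub_nonneg_iff (A : E →L[𝕜] E) (y : E) :
    0 ≤ RCLike.re (inner 𝕜 y ((2 * (1 - A)) y)) ↔
      RCLike.re (inner 𝕜 y (A y)) ≤ RCLike.re (inner 𝕜 y y) := by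
  simp only [two_mul, add_apply, sub_apply, one_apply_eq_self, inner_add_right, inner_sub_right, map_add,
    map_sub]
  constructor <;> intro h <;> linarith

theorem isClosed_setOf_re_inner_apply_nonneg (P : E →L[𝕜] E) :
    IsClosed {y : E | 0 ≤ RCLike.re (inner 𝕜 y (P y))} :=
  isClosed_le continuous_const <| RCLike.continuous_re.comp <| continuous_id.inner P.continuous

variable [CompleteSpace E]

theorem denseRange_adjoint_of_injective {T : E →L[𝕜] E} (hT : Function.Injective T) :
    DenseRange (adjoint T) := by
  have h := T.orthogonal_ker
  rw [LinearMap.ker_eq_bot.mpr hT, Submodule.bot_orthogonal_eq_top] at h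
  exact Submodule.dense_iff_topologicalClosure_eq_top.mpr h.symm

theorem inner_mul_mul_adjoint_apply (S P : E →L[𝕜] E) (x : E) :
    inner 𝕜 x ((S * P * adjoint S) x) = inner 𝕜 (adjoint S x) (P (adjoint S x)) :=
  (adjoint_inner_left S _ x).symm

theorem forall_re_inner_mul_mul_adjoint_nonneg_iff {S : E →L[𝕜] E} (hS : Function.Injective S)
    (P : E →L[𝕜] E) :
    (∀ x, 0 ≤ RCLike.re (inner 𝕜 x ((S * P * adjoint S) x))) ↔
      ∀ y, 0 ≤ RCLike.re (inner 𝕜 y (P y)) := by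
  simp only [inner_mul_mul_adjoint_apply]
  refine ⟨fun h y ↦ ?_, fun h x ↦ h _⟩
  exact (denseRange_adjoint_of_injective hS).induction_on y
    (isClosed_setOf_re_inner_apply_nonneg P) h

end InnerProductSpace

open ContinuousLinearMap in
theorem pos_iff_contraction_general {H : Type*} [NormedAddCommGroup H]
    [InnerProductSpace ℂ H] [CompleteSpace H]
    (W1 W2 V : H →L[ℂ] H) (hinj : Function.Injective (W1 + W2))
    (hV1 : W1 = ((1/2 : ℂ) • (W1 + W2)) ∘L (1 + V))
    (hV2 : W2 = ((1/2 : ℂ) • (W1 + W2)) ∘L (1 - V)) :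
    (∀ x : H, 0 ≤ (inner ℂ x ((W2 ∘L adjoint W1 + W1 ∘L adjoint W2) x) : ℂ).re) ↔
      (∀ x : H, (inner ℂ x ((V ∘L adjoint V) x) : ℂ).re ≤ (inner ℂ x x : ℂ).re) := by
  set T := (1/2 : ℂ) • (W1 + W2)
  have hT : Function.Injective T := (smul_right_injective H (by norm_num)).comp hinj
  have hsum : W2 ∘L adjoint W1 + W1 ∘L adjoint W2 = T * (2 * (1 - V * adjoint V)) * adjoint T := by
    rw [hV1, hV2]
    exact mul_one_sub_mul_star_add T V
  rw [hsum]
  exact (forall_re_inner_mul_mul_adjoint_nonneg_iff hT _).trans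
    (forall_congr' (re_inner_two_mul_one_sub_nonneg_iff _))

open ContinuousLinearMap in
/-- `W2 W1* + W1 W2* ≥ 0` iff `V V* ≤ I` for the `V` from the factorization. -/
theorem pos_iff_contraction {H : Type*} [NormedAddCommGroup H]
    [InnerProductSpace ℂ H] [CompleteSpace H]
    (W1 W2 V : H →L[ℂ] H) (hinj : Function.Injective (W1 + W2))
    (hran : Set.range ⇑(W1 - W2) ⊆ Set.range ⇑(W1 + W2))
    (hV1 : W1 = ((1/2 : ℂ) • (W1 + W2)) ∘L (1 + V))
    (hV2 : W2 = ((1/2 : ℂ) • (W1 + W2)) ∘L (1 - V)) :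
    (∀ x : H, 0 ≤ (inner ℂ x ((W2 ∘L adjoint W1 + W1 ∘L adjoint W2) x) : ℂ).re) ↔
      (∀ x : H, (inner ℂ x ((V ∘L adjoint V) x) : ℂ).re ≤ (inner ℂ x x : ℂ).re) :=
  pos_iff_contraction_general W1 W2 V hinj hV1 hV2
end

section
/- Let H be a finite-dimensional Hilbert space and W1, W2 ∈ L(H) such that W = [W1, W2] : H×H → H is surjective and W2 W1* + W1 W2* ≥ 0. Then W1 + W2 is injective. -/
/-!
Expanding both norms, `‖(W1 + W2)† x‖² - ‖(W1 - W2)† x‖² = 4 Re ⟪W1† x, W2† x⟫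
= 2 Re ⟪x, (W2 W1† + W1 W2†) x⟫ ≥ 0`. Hence a vector killed by `(W1 + W2)†` is killed by
`(W1 - W2)†`, so by `W1†` and `W2†`; it is then orthogonal to `range W1 + range W2`, which is
everything. So `(W1 + W2)†` is injective, and in finite dimensions so is `W1 + W2`.
-/

open RCLike

namespace ContinuousLinearMap

variable {𝕜 E F G : Type*} [RCLike 𝕜]
  [NormedAddCommGroup E] [InnerProductSpace 𝕜 E] [CompleteSpace E]
  [NormedAddCommGroup F] [InnerProductSpace 𝕜 F] [CompleteSpace F]
  [NormedAddCommGroup G] [InnerProductSpace 𝕜 G] [CompleteSpace G]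

theorem re_inner_comp_adjoint_add_comp_adjoint (W1 W2 : E →L[𝕜] F) (x : F) :
    re (inner 𝕜 x ((W2 ∘L adjoint W1 + W1 ∘L adjoint W2) x)) =
      2 * re (inner 𝕜 (adjoint W1 x) (adjoint W2 x)) := by
  rw [add_apply, comp_apply, comp_apply, inner_add_right, ← adjoint_inner_left W2,
    ← adjoint_inner_left W1, map_add, ← inner_conj_symm, conj_re]
  ring

theorem norm_adjoint_sub_apply_le_norm_adjoint_add_apply {W1 W2 : E →L[𝕜] F}
    (hpos : ∀ x : F, 0 ≤ re (inner 𝕜 x ((W2 ∘L adjoint W1 + W1 ∘L adjoint W2) x))) (x : F) :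
    ‖adjoint (W1 - W2) x‖ ≤ ‖adjoint (W1 + W2) x‖ := by
  have h := hpos x
  rw [re_inner_comp_adjoint_add_comp_adjoint] at h
  rw [← pow_le_pow_iff_left₀ (norm_nonneg _) (norm_nonneg _) two_ne_zero, map_sub, map_add,
    sub_apply, add_apply, norm_sub_sq (𝕜 := 𝕜), norm_add_sq (𝕜 := 𝕜)]
  linarith

theorem eq_zero_of_adjoint_apply_eq_zero_of_surjective {W1 : E →L[𝕜] F} {W2 : G →L[𝕜] F}
    (hsurj : Function.Surjective fun p : E × G => W1 p.1 + W2 p.2) {x : F}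
    (h1 : adjoint W1 x = 0) (h2 : adjoint W2 x = 0) : x = 0 := by
  obtain ⟨⟨y, z⟩, hyz⟩ := hsurj x
  rw [← inner_self_eq_zero (𝕜 := 𝕜)]
  nth_rw 2 [← hyz]
  rw [inner_add_right, ← adjoint_inner_left W1, ← adjoint_inner_left W2, h1, h2,
    inner_zero_left, inner_zero_left, add_zero]

theorem adjoint_apply_eq_zero_of_adjoint_add_apply_eq_zero {W1 W2 : E →L[𝕜] F}
    (hpos : ∀ x : F, 0 ≤ re (inner 𝕜 x ((W2 ∘L adjoint W1 + W1 ∘L adjoint W2) x))) {x : F}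
    (hx : adjoint (W1 + W2) x = 0) : adjoint W1 x = 0 ∧ adjoint W2 x = 0 := by
  have hsub : adjoint (W1 - W2) x = 0 := norm_le_zero_iff.mp <| by
    simpa only [hx, norm_zero] using norm_adjoint_sub_apply_le_norm_adjoint_add_apply hpos x
  rw [map_add, add_apply] at hx
  rw [map_sub, sub_apply, sub_eq_zero] at hsub
  rw [hsub, ← two_smul 𝕜, smul_eq_zero] at hx
  have h2 : adjoint W2 x = 0 := hx.resolve_left two_ne_zero
  exact ⟨hsub ▸ h2, h2⟩

theorem injective_of_injective_adjoint [FiniteDimensional 𝕜 E] {T : E →L[𝕜] E}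
    (h : Function.Injective (adjoint T)) : Function.Injective T := by
  have hrange : T.rangeᗮ = ⊥ := by
    rw [orthogonal_range, LinearMap.ker_eq_bot]
    exact h
  exact LinearMap.injective_iff_surjective.mpr
    (LinearMap.range_eq_top.mp (Submodule.orthogonal_eq_bot_iff.mp hrange))

end ContinuousLinearMap

open ContinuousLinearMap in
/-- In finite dimensions, surjectivity of `[W1, W2]` together with
`W2 W1* + W1 W2* ≥ 0` implies injectivity of `W1 + W2`. -/
theorem injective_of_surjective_pos {H : Type*} [NormedAddCommGroup H]
    [InnerProductSpace ℂ H] [FiniteDimensional ℂ H]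
    (W1 W2 : H →L[ℂ] H)
    (hsurj : Function.Surjective fun p : H × H => W1 p.1 + W2 p.2)
    (hpos : ∀ x : H,
      0 ≤ (inner ℂ x ((W2 ∘L adjoint W1 + W1 ∘L adjoint W2) x) : ℂ).re) :
    Function.Injective (W1 + W2) := by
  refine injective_of_injective_adjoint ((injective_iff_map_eq_zero _).mpr fun x hx => ?_)
  obtain ⟨h1, h2⟩ := adjoint_apply_eq_zero_of_adjoint_add_apply_eq_zero hpos hx
  exact eq_zero_of_adjoint_apply_eq_zero_of_surjective hsurj h1 h2
end

section
/- Let x ∈ W^{N,2}((0,1); H) for a Hilbert space H, let P_k ∈ L(H) for k = 1,…,N satisfy P_k* = (−1)^{k+1} P_k, and define the block operator matrix Q on H^N by Q_{ij} = (−1)^{i−1} P_{i+j−1} if i+j ≤ N+1 and Q_{ij} = 0 otherwise. Then 2 Re⟨Σ_{k=1}^N P_k x^{(k)}, x⟩_{L^2((0,1);H)} = Φ1(x)* Q Φ1(x) − Φ0(x)* Q Φ0(x), where Φ_i(x) = (x(i), x'(i), …, x^{(N−1)}(i)). -/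
/-!
For each `k`, the alternating sum `B_k(t) = ∑_{i<k} (-1)^i ⟪x^{(i)}(t), P_k x^{(k-1-i)}(t)⟫`
differentiates by telescoping to `⟪x, P_k x^{(k)}⟫ + (-1)^{k+1} ⟪x^{(k)}, P_k x⟫`, whose real part
is `2 Re ⟪P_k x^{(k)}, x⟫` because `P_k* = (-1)^{k+1} P_k`. The fundamental theorem of calculus
applied to `∑_k Re B_k` gives the identity, and regrouping the terms of `B_k` by `(i, j)` with
`i + j = k - 1` turns its boundary values into the quadratic form of `Q`.
-/

open ContinuousLinearMap Finset MeasureTheory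

theorem sum_Icc_sum_range_eq_sum_fin_ite {M : Type*} [AddCommMonoid M] (N : ℕ)
    (c : ℕ → ℕ → M) :
    ∑ k ∈ Icc 1 N, ∑ i ∈ range k, c i (k - 1 - i) =
      ∑ i : Fin N, ∑ j : Fin N, if (i : ℕ) + j + 1 ≤ N then c i j else 0 := by
  rw [Fin.sum_univ_eq_sum_range (fun i => ∑ j : Fin N, if i + (j : ℕ) + 1 ≤ N then c i j else 0)]
  simp_rw [fun i => Fin.sum_univ_eq_sum_range (fun j => if i + j + 1 ≤ N then c i j else 0) N]
  rw [← sum_product' (f := fun i j => if i + j + 1 ≤ N then c i j else 0), ← sum_filter,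
    sum_sigma']
  refine sum_nbij' (fun p => (p.2, p.1 - 1 - p.2)) (fun p => ⟨p.1 + p.2 + 1, p.1⟩)
    ?_ ?_ ?_ ?_ (fun _ _ => rfl) <;>
  simp only [mem_sigma, mem_Icc, mem_range, mem_filter, mem_product, Sigma.forall,
      Prod.forall, Prod.mk.injEq, Sigma.mk.injEq, heq_eq_eq, and_true, true_and] <;>
  omega

theorem ContDiff.hasDerivAt_iteratedDeriv {F : Type*} [NormedAddCommGroup F] [NormedSpace ℝ F]
    {n m : ℕ} {x : ℝ → F} (hx : ContDiff ℝ n x) (hm : m < n) (t : ℝ) :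
    HasDerivAt (iteratedDeriv m x) (iteratedDeriv (m + 1) x t) t := by
  rw [iteratedDeriv_succ]
  exact ((hx.differentiable_iteratedDeriv m (by exact_mod_cast hm)) t).hasDerivAt

section

variable {𝕜 E : Type*} [RCLike 𝕜] [NormedAddCommGroup E] [InnerProductSpace 𝕜 E]

local notation "⟪" x ", " y "⟫" => inner 𝕜 x y

theorem re_inner_add_neg_one_pow_mul_inner [CompleteSpace E] {A : E →L[𝕜] E} {m : ℕ}
    (hA : adjoint A = (-1 : 𝕜) ^ m • A) (u v : E) :
    RCLike.re (⟪u, A v⟫ + (-1) ^ m * ⟪v, A u⟫) = 2 * RCLike.re ⟪A v, u⟫ := by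
  have hvu : ⟪v, A u⟫ = (-1) ^ m * ⟪A v, u⟫ := by
    rw [← adjoint_inner_left, hA, smul_apply, inner_smul_left]
    simp
  rw [hvu, ← mul_assoc, ← pow_add, ← two_mul, pow_mul, neg_one_sq, one_pow, one_mul,
    ← inner_conj_symm, map_add, RCLike.conj_re]
  ring

variable [NormedSpace ℝ E]

noncomputable def boundaryForm (A : E →L[𝕜] E) (k : ℕ) (x : ℝ → E) (t : ℝ) : 𝕜 :=
  ∑ i ∈ range k, (-1) ^ i * ⟪iteratedDeriv i x t, A (iteratedDeriv (k - 1 - i) x t)⟫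

theorem re_boundaryForm (A : E →L[𝕜] E) (k : ℕ) (x : ℝ → E) (t : ℝ) :
    RCLike.re (boundaryForm A k x t) = ∑ i ∈ range k,
      (-1 : ℝ) ^ i * RCLike.re ⟪iteratedDeriv i x t, A (iteratedDeriv (k - 1 - i) x t)⟫ := by
  simp only [boundaryForm, map_sum]
  refine sum_congr rfl fun i _ => ?_
  rw [show (-1 : 𝕜) ^ i = (((-1 : ℝ) ^ i : ℝ) : 𝕜) by push_cast; rfl, RCLike.re_ofReal_mul]

theorem sum_re_boundaryForm (A : ℕ → E →L[𝕜] E) (N : ℕ) (x : ℝ → E) (t : ℝ) :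
    ∑ k ∈ Icc 1 N, RCLike.re (boundaryForm (A k) k x t) =
      ∑ i : Fin N, ∑ j : Fin N, if (i : ℕ) + j + 1 ≤ N then (-1 : ℝ) ^ (i : ℕ) *
        RCLike.re ⟪iteratedDeriv i x t, A (i + j + 1) (iteratedDeriv j x t)⟫ else 0 := by
  rw [← sum_Icc_sum_range_eq_sum_fin_ite N fun i j => (-1 : ℝ) ^ i *
    RCLike.re ⟪iteratedDeriv i x t, A (i + j + 1) (iteratedDeriv j x t)⟫]
  refine sum_congr rfl fun k _ => ?_
  rw [re_boundaryForm]
  refine sum_congr rfl fun i hi => ?_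
  rw [show i + (k - 1 - i) + 1 = k by have := mem_range.1 hi; omega]

variable [IsScalarTower ℝ 𝕜 E]

theorem hasDerivAt_boundaryForm (A : E →L[𝕜] E) {k : ℕ} {x : ℝ → E} (hx : ContDiff ℝ k x)
    (t : ℝ) :
    HasDerivAt (boundaryForm A k x)
      (⟪x t, A (iteratedDeriv k x t)⟫ + (-1) ^ (k + 1) * ⟪iteratedDeriv k x t, A (x t)⟫) t := by
  set D : ℕ → 𝕜 := fun i => (-1) ^ i * ⟪iteratedDeriv i x t, A (iteratedDeriv (k - i) x t)⟫
  have hterm : ∀ i ∈ range k, HasDerivAt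
      (fun s => (-1) ^ i * ⟪iteratedDeriv i x s, A (iteratedDeriv (k - 1 - i) x s)⟫)
      (D i - D (i + 1)) t := by
    intro i hi
    rw [mem_range] at hi
    have hi' := hx.hasDerivAt_iteratedDeriv hi t
    have hj := hx.hasDerivAt_iteratedDeriv (m := k - 1 - i) (by omega) t
    rw [show k - 1 - i + 1 = k - i by omega] at hj
    have hAj : HasDerivAt (fun s => A (iteratedDeriv (k - 1 - i) x s))
        (A (iteratedDeriv (k - i) x t)) t :=
      (A.restrictScalars ℝ).hasFDerivAt.comp_hasDerivAt t hj
    refine ((hi'.inner 𝕜 hAj).const_mul ((-1 : 𝕜) ^ i)).congr_deriv ?_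
    simp only [D, show k - (i + 1) = k - 1 - i by omega]
    ring
  refine (HasDerivAt.fun_sum hterm).congr_deriv ?_
  rw [sum_range_sub']
  simp only [D, pow_zero, one_mul, Nat.sub_zero, Nat.sub_self, iteratedDeriv_zero]
  ring

theorem hasDerivAt_re_boundaryForm [CompleteSpace E] {A : E →L[𝕜] E} {k : ℕ}
    (hA : adjoint A = (-1 : 𝕜) ^ (k + 1) • A) {x : ℝ → E} (hx : ContDiff ℝ k x) (t : ℝ) :
    HasDerivAt (fun s => RCLike.re (boundaryForm A k x s))
      (2 * RCLike.re ⟪A (iteratedDeriv k x t), x t⟫) t := by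
  rw [← re_inner_add_neg_one_pow_mul_inner hA]
  exact RCLike.reCLM.hasFDerivAt.comp_hasDerivAt t (hasDerivAt_boundaryForm A hx t)

end

open ContinuousLinearMap in
theorem integration_by_parts_orderN_general {H : Type*} [NormedAddCommGroup H]
    [InnerProductSpace ℂ H] [CompleteSpace H]
    (N : ℕ) (P : ℕ → H →L[ℂ] H)
    (hP : ∀ k, 1 ≤ k → k ≤ N → adjoint (P k) = ((-1 : ℂ)) ^ (k + 1) • P k)
    (x : ℝ → H) (hx : ContDiff ℝ N x) :
    2 * (∫ t in Set.Ioo (0:ℝ) 1,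
        (inner ℂ (∑ k ∈ Finset.Icc 1 N, P k (iteratedDeriv k x t)) (x t) : ℂ)).re =
      (∑ i : Fin N, ∑ j : Fin N,
        if (i : ℕ) + (j : ℕ) + 1 ≤ N then
          (-1 : ℝ) ^ (i : ℕ) *
            (inner ℂ (iteratedDeriv (i : ℕ) x 1)
              (P ((i : ℕ) + (j : ℕ) + 1) (iteratedDeriv (j : ℕ) x 1)) : ℂ).re
        else 0) -
      (∑ i : Fin N, ∑ j : Fin N,
        if (i : ℕ) + (j : ℕ) + 1 ≤ N then
          (-1 : ℝ) ^ (i : ℕ) *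
            (inner ℂ (iteratedDeriv (i : ℕ) x 0)
              (P ((i : ℕ) + (j : ℕ) + 1) (iteratedDeriv (j : ℕ) x 0)) : ℂ).re
        else 0) := by
  set f : ℝ → ℂ := fun t => inner ℂ (∑ k ∈ Icc 1 N, P k (iteratedDeriv k x t)) (x t)
  set F : ℝ → ℝ := fun t => ∑ k ∈ Icc 1 N, (boundaryForm (P k) k x t).re
  have hF : ∀ t, HasDerivAt F (2 * (f t).re) t := by
    intro t
    simp only [f, sum_inner, Complex.re_sum, mul_sum]
    refine HasDerivAt.fun_sum fun k hk => ?_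
    rw [mem_Icc] at hk
    exact hasDerivAt_re_boundaryForm (hP k hk.1 hk.2) (hx.of_le (by exact_mod_cast hk.2)) t
  have hf : Continuous f := by
    refine (continuous_finsetSum _ fun k hk => ?_).inner hx.continuous
    have hkN : (k : WithTop ℕ∞) ≤ N := by exact_mod_cast (mem_Icc.1 hk).2
    exact (P k).continuous.comp (hx.continuous_iteratedDeriv k hkN)
  have hFTC : ∫ t in Set.Ioo (0 : ℝ) 1, 2 * (f t).re = F 1 - F 0 := by
    rw [← integral_Ioc_eq_integral_Ioo, ← intervalIntegral.integral_of_le zero_le_one]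
    exact intervalIntegral.integral_eq_sub_of_hasDerivAt (fun t _ => hF t)
      ((continuous_const.mul (Complex.continuous_re.comp hf)).intervalIntegrable 0 1)
  have hint : IntegrableOn f (Set.Ioo 0 1) :=
    hf.integrableOn_Icc.mono_set Set.Ioo_subset_Icc_self
  calc 2 * (∫ t in Set.Ioo (0 : ℝ) 1, f t).re
      = ∫ t in Set.Ioo (0 : ℝ) 1, 2 * (f t).re := by
        rw [integral_const_mul]
        exact congrArg (2 * ·) (integral_re hint).symm
    _ = F 1 - F 0 := hFTC
    _ = _ := congrArg₂ (· - ·) (sum_re_boundaryForm P N x 1) (sum_re_boundaryForm P N x 0)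

open ContinuousLinearMap in
/-- Integration by parts for the order-`N` port-Hamiltonian operator:
`2 Re⟨∑ₖ Pₖ x⁽ᵏ⁾, x⟩_{L²(0,1)} = Φ₁(x)* Q Φ₁(x) − Φ₀(x)* Q Φ₀(x)`,
where `Q_{ij} = (−1)^{i−1} P_{i+j−1}` for `i+j ≤ N+1` (1-indexed) and `0` otherwise. -/
theorem integration_by_parts_orderN {H : Type*} [NormedAddCommGroup H]
    [InnerProductSpace ℂ H] [CompleteSpace H]
    (N : ℕ) (hN : 1 ≤ N) (P : ℕ → H →L[ℂ] H)
    (hP : ∀ k, 1 ≤ k → k ≤ N → adjoint (P k) = ((-1 : ℂ)) ^ (k + 1) • P k)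
    (x : ℝ → H) (hx : ContDiff ℝ N x) :
    2 * (∫ t in Set.Ioo (0:ℝ) 1,
        (inner ℂ (∑ k ∈ Finset.Icc 1 N, P k (iteratedDeriv k x t)) (x t) : ℂ)).re =
      (∑ i : Fin N, ∑ j : Fin N,
        if (i : ℕ) + (j : ℕ) + 1 ≤ N then
          (-1 : ℝ) ^ (i : ℕ) *
            (inner ℂ (iteratedDeriv (i : ℕ) x 1)
              (P ((i : ℕ) + (j : ℕ) + 1) (iteratedDeriv (j : ℕ) x 1)) : ℂ).re
        else 0) -
      (∑ i : Fin N, ∑ j : Fin N,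
        if (i : ℕ) + (j : ℕ) + 1 ≤ N then
          (-1 : ℝ) ^ (i : ℕ) *
            (inner ℂ (iteratedDeriv (i : ℕ) x 0)
              (P ((i : ℕ) + (j : ℕ) + 1) (iteratedDeriv (j : ℕ) x 0)) : ℂ).re
        else 0) :=
  integration_by_parts_orderN_general N P hP x hx
end
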